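/- arXiv:2510.00445 — 7 statements merged into one kernel-verified Lean document; each statement's English description precedes it below -/
import Mathlib

section
/- Let H be a separable Hilbert space with orthonormal basis (e_j)_{j∈ℤ}, let α > 1 be real, and let V be the bounded linear operator on H defined by V(e_n) = α·e_{n+1} for n < 0 and V(e_n) = (1/α)·e_{n+1} for n ≥ 0. Then for every m ∈ ℕ, the operator norms ‖V^k P_m‖ tend to 0 as k → ∞, where P_m is the orthogonal projection onto span{e_{-m},...,e_m}. -/
/-!
`V ^ k` maps `e j` to a multiple of `e (j + k)` whose weight has at most `max (-j) 0` factors `α`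
and otherwise factors `α⁻¹`, so `‖V ^ k (e j)‖ ≤ α ^ (2 * max (-j) 0) * α⁻¹ ^ k`. As `V ^ k * P m`
only sees the `2m + 1` vectors `e j` with `|j| ≤ m`, its norm is at most
`(2m + 1) α ^ (2m) α⁻¹ ^ k`, which tends to `0`.
-/

open Filter Topology

namespace HilbertBasis

variable {ι 𝕜 E F : Type*} [RCLike 𝕜] [NormedAddCommGroup E] [InnerProductSpace 𝕜 E]
  [NormedAddCommGroup F] [NormedSpace 𝕜 F]

theorem norm_repr_apply_le (e : HilbertBasis ι 𝕜 E) (x : E) (j : ι) : ‖e.repr x j‖ ≤ ‖x‖ :=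
  (lp.norm_apply_le_norm two_ne_zero (e.repr x) j).trans_eq (e.repr.norm_map x)

theorem apply_eq_sum_of_apply_eq_zero (e : HilbertBasis ι 𝕜 E) (T : E →L[𝕜] F) (s : Finset ι)
    (hT : ∀ j ∉ s, T (e j) = 0) (x : E) : T x = ∑ j ∈ s, e.repr x j • T (e j) := by
  have hsum : HasSum (fun j => e.repr x j • T (e j)) (T x) := by
    simpa only [map_smul] using (e.hasSum_repr x).mapL T
  exact hsum.unique (hasSum_sum_of_ne_finset_zero fun j hj => by rw [hT j hj, smul_zero])

theorem opNorm_le_card_mul_of_apply_eq_zero (e : HilbertBasis ι 𝕜 E) (T : E →L[𝕜] F)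
    (s : Finset ι) (hT : ∀ j ∉ s, T (e j) = 0) {c : ℝ} (hc : 0 ≤ c)
    (hTs : ∀ j ∈ s, ‖T (e j)‖ ≤ c) : ‖T‖ ≤ s.card * c := by
  refine T.opNorm_le_bound (by positivity) fun x => ?_
  calc ‖T x‖ = ‖∑ j ∈ s, e.repr x j • T (e j)‖ := by rw [e.apply_eq_sum_of_apply_eq_zero T s hT]
    _ ≤ ∑ j ∈ s, ‖e.repr x j‖ * ‖T (e j)‖ := by
        simpa only [norm_smul] using norm_sum_le s fun j => e.repr x j • T (e j)
    _ ≤ ∑ _j ∈ s, ‖x‖ * c := by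
        gcongr with j hj
        exacts [e.norm_repr_apply_le x j, hTs j hj]
    _ = s.card * c * ‖x‖ := by rw [Finset.sum_const, nsmul_eq_mul]; ring

end HilbertBasis

theorem norm_weightedShift_pow_apply_le {H : Type*} [NormedAddCommGroup H] [NormedSpace ℂ H]
    (e : ℤ → H) (he : ∀ j, ‖e j‖ = 1) {α : ℝ} (hα : 1 ≤ α) (V : H →L[ℂ] H)
    (hV : ∀ n : ℤ, V (e n) = if n < 0 then (α : ℂ) • e (n + 1) else (α : ℂ)⁻¹ • e (n + 1))
    (k : ℕ) (j : ℤ) : ‖(V ^ k) (e j)‖ ≤ α ^ (2 * (-j).toNat) * α⁻¹ ^ k := by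
  have hα0 : 0 < α := zero_lt_one.trans_le hα
  induction k generalizing j with
  | zero => simpa [he j] using one_le_pow₀ hα
  | succ k ih =>
    have hstep : (V ^ (k + 1)) (e j) = (V ^ k) (V (e j)) := by rw [pow_succ, mul_apply_eq_comp]
    rw [hstep, hV j]
    split_ifs with hj
    · have hexp : (-j).toNat = (-(j + 1)).toNat + 1 := by omega
      calc ‖(V ^ k) ((α : ℂ) • e (j + 1))‖ = α * ‖(V ^ k) (e (j + 1))‖ := by
            rw [map_smul, norm_smul, Complex.norm_real, Real.norm_of_nonneg hα0.le]
        _ ≤ α * (α ^ (2 * (-(j + 1)).toNat) * α⁻¹ ^ k) := by gcongr; exact ih (j + 1)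
        _ = α ^ (2 * (-j).toNat) * α⁻¹ ^ (k + 1) := by
            rw [hexp, mul_add, pow_add, pow_succ α⁻¹]; field_simp
    · have hexp : (-j).toNat = 0 ∧ (-(j + 1)).toNat = 0 := by omega
      calc ‖(V ^ k) ((α : ℂ)⁻¹ • e (j + 1))‖ = α⁻¹ * ‖(V ^ k) (e (j + 1))‖ := by
            rw [map_smul, norm_smul, norm_inv, Complex.norm_real, Real.norm_of_nonneg hα0.le]
        _ ≤ α⁻¹ * (α ^ (2 * (-(j + 1)).toNat) * α⁻¹ ^ k) := by gcongr; exact ih (j + 1)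
        _ = α ^ (2 * (-j).toNat) * α⁻¹ ^ (k + 1) := by rw [hexp.1, hexp.2]; ring

theorem stmt0_general
    {H : Type*} [NormedAddCommGroup H] [InnerProductSpace ℂ H]
    (e : HilbertBasis ℤ ℂ H)
    (α : ℝ) (hα : 1 < α)
    (V : H →L[ℂ] H)
    (hV : ∀ n : ℤ, V (e n) = if n < 0 then (α : ℂ) • e (n + 1) else (α : ℂ)⁻¹ • e (n + 1))
    (P : ℕ → (H →L[ℂ] H))
    (hP₁ : ∀ (m : ℕ) (j : ℤ), |j| ≤ (m : ℤ) → P m (e j) = e j)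
    (hP₂ : ∀ (m : ℕ) (j : ℤ), (m : ℤ) < |j| → P m (e j) = 0) :
    ∀ m : ℕ, Tendsto (fun k : ℕ => ‖(V ^ k) * P m‖) atTop (𝓝 0) := by
  intro m
  set s := Finset.Icc (-(m : ℤ)) m
  have hbound (k : ℕ) : ‖(V ^ k) * P m‖ ≤ s.card * (α ^ (2 * m) * α⁻¹ ^ k) := by
    refine e.opNorm_le_card_mul_of_apply_eq_zero _ s (fun j hj => ?_) (by positivity)
      fun j hj => ?_
    · have hjm : (m : ℤ) < |j| := by rw [Finset.mem_Icc] at hj; rw [lt_abs]; omega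
      rw [mul_apply_eq_comp, hP₂ m j hjm, map_zero]
    · have hjm : -(m : ℤ) ≤ j ∧ j ≤ m := Finset.mem_Icc.mp hj
      rw [mul_apply_eq_comp, hP₁ m j (abs_le.mpr hjm)]
      refine (norm_weightedShift_pow_apply_le e e.orthonormal.1 hα.le V hV k j).trans ?_
      gcongr
      · exact hα.le
      · omega
  have hlim : Tendsto (fun k : ℕ => s.card * (α ^ (2 * m) * α⁻¹ ^ k)) atTop (𝓝 0) := by
    simpa using ((tendsto_pow_atTop_nhds_zero_of_lt_one (by positivity)
      (inv_lt_one_of_one_lt₀ hα)).const_mul (α ^ (2 * m))).const_mul (s.card : ℝ)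
  exact squeeze_zero (fun k => norm_nonneg _) hbound hlim

theorem stmt0
    {H : Type*} [NormedAddCommGroup H] [InnerProductSpace ℂ H] [CompleteSpace H]
    [TopologicalSpace.SeparableSpace H]
    (e : HilbertBasis ℤ ℂ H)
    (α : ℝ) (hα : 1 < α)
    (V : H →L[ℂ] H)
    (hV : ∀ n : ℤ, V (e n) = if n < 0 then (α : ℂ) • e (n + 1) else (α : ℂ)⁻¹ • e (n + 1))
    (P : ℕ → (H →L[ℂ] H))
    (hP₁ : ∀ (m : ℕ) (j : ℤ), |j| ≤ (m : ℤ) → P m (e j) = e j)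
    (hP₂ : ∀ (m : ℕ) (j : ℤ), (m : ℤ) < |j| → P m (e j) = 0) :
    ∀ m : ℕ, Tendsto (fun k : ℕ => ‖(V ^ k) * P m‖) atTop (𝓝 0) :=
  stmt0_general e α hα V hV P hP₁ hP₂
end

section
/- Let H be a separable Hilbert space with orthonormal basis (e_j)_{j∈ℤ}, let α > 1, and let V be defined by V(e_n) = α·e_{n+1} for n < 0 and V(e_n) = (1/α)·e_{n+1} for n ≥ 0. Then V is invertible and for every m ∈ ℕ, ‖V^{-k} P_m‖ → 0 as k → ∞. -/
open Filter Topology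

open scoped InnerProductSpace ComplexConjugate

/-!
`V† V` and `V V†` are diagonal in the basis `e`, with entries `α²` and `α⁻²`; a diagonal
operator `D` with two nonzero eigenvalues `c, d` satisfies `D ((c + d) - D) = c d`, so both are
invertible, which gives `V` a right and a left inverse.

The inverse sends `e j` to `α⁻¹ e (j - 1)` or `α e (j - 1)`, the factor `α` occurring only on the
at most `max j 0` steps starting at a positive index. Hence `‖V⁻ᵏ e j‖ ≤ α ^ (2 max j 0 - k)`, and
`P m`, a finite sum of rank-one projections onto basis vectors, is killed by `V⁻ᵏ` as `k → ∞`.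
-/

theorem isUnit_of_isUnit_mul_of_isUnit_mul_swap {M : Type*} [Monoid M] {x y : M}
    (hxy : IsUnit (x * y)) (hyx : IsUnit (y * x)) : IsUnit x :=
  isUnit_iff_exists_and_exists.2
    ⟨⟨y * ↑hxy.unit⁻¹, by rw [← mul_assoc, hxy.mul_val_inv]⟩,
      ⟨↑hyx.unit⁻¹ * y, by rw [mul_assoc, hyx.val_inv_mul]⟩⟩

namespace HilbertBasis

variable {ι 𝕜 E : Type*} [RCLike 𝕜] [NormedAddCommGroup E] [InnerProductSpace 𝕜 E]
  (b : HilbertBasis ι 𝕜 E)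

theorem ext_continuousLinearMap {F : Type*} [NormedAddCommGroup F] [NormedSpace 𝕜 F]
    {f g : E →L[𝕜] F} (h : ∀ i, f (b i) = g (b i)) : f = g :=
  ContinuousLinearMap.ext_on
    (Submodule.dense_iff_topologicalClosure_eq_top.2 b.dense_span) (by rintro _ ⟨i, rfl⟩; exact h i)

theorem ext_inner {x y : E} (h : ∀ i, ⟪b i, x⟫_𝕜 = ⟪b i, y⟫_𝕜) : x = y :=
  b.repr.injective <| lp.ext <| funext fun i => by
    simp only [b.repr_apply_apply, h]

theorem isUnit_of_apply_eq_smul_or {D : E →L[𝕜] E} {c d : 𝕜} (hc : c ≠ 0) (hd : d ≠ 0)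
    (hD : ∀ i, D (b i) = c • b i ∨ D (b i) = d • b i) : IsUnit D := by
  have key : D * ((c + d) • 1 - D) = (c * d) • 1 := b.ext_continuousLinearMap fun i => by
    rcases hD i with h | h <;>
      simp only [mul_apply_eq_comp, sub_apply, smul_apply, one_apply_eq_self, map_smul, h,
        smul_smul, ← sub_smul] <;> congr 1 <;> ring
  have hcomm : ((c + d) • 1 - D) * D = D * ((c + d) • 1 - D) := by
    rw [sub_mul, mul_sub, smul_mul_assoc, mul_smul_comm, one_mul, mul_one]
  refine isUnit_iff_exists.2 ⟨(c * d)⁻¹ • ((c + d) • 1 - D), ?_, ?_⟩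
  · rw [mul_smul_comm, key, smul_smul, inv_mul_cancel₀ (mul_ne_zero hc hd), one_smul]
  · rw [smul_mul_assoc, hcomm, key, smul_smul, inv_mul_cancel₀ (mul_ne_zero hc hd), one_smul]

theorem adjoint_apply_eq_of_apply_eq [CompleteSpace E] {V : E →L[𝕜] E} {w : ι → 𝕜}
    {σ : ι → ι} (hσ : σ.Injective) (hV : ∀ i, V (b i) = w i • b (σ i)) (i : ι) :
    V.adjoint (b (σ i)) = conj (w i) • b i := by
  classical
  refine b.ext_inner fun j => ?_
  rw [ContinuousLinearMap.adjoint_inner_right, hV, inner_smul_left, inner_smul_right,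
    orthonormal_iff_ite.1 b.orthonormal, orthonormal_iff_ite.1 b.orthonormal, hσ.eq_iff]
  split_ifs with h
  · rw [h]
  · simp

theorem sum_rankOne_eq_of_apply_eq_ite [DecidableEq ι] (s : Finset ι) {P : E →L[𝕜] E}
    (hP : ∀ i, P (b i) = if i ∈ s then b i else 0) :
    ∑ i ∈ s, InnerProductSpace.rankOne 𝕜 (b i) (b i) = P := by
  refine b.ext_continuousLinearMap fun j => ?_
  simp only [sum_apply, InnerProductSpace.rankOne_apply,
    orthonormal_iff_ite.1 b.orthonormal, ite_smul, one_smul, zero_smul, hP]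
  rw [Finset.sum_ite_eq']

theorem norm_mul_le_sum_norm_apply (s : Finset ι) (T : E →L[𝕜] E) :
    ‖T * ∑ i ∈ s, InnerProductSpace.rankOne 𝕜 (b i) (b i)‖ ≤ ∑ i ∈ s, ‖T (b i)‖ := by
  rw [Finset.mul_sum]
  refine (norm_sum_le _ _).trans (le_of_eq (Finset.sum_congr rfl fun i _ => ?_))
  rw [ContinuousLinearMap.mul_def, InnerProductSpace.comp_rankOne,
    InnerProductSpace.norm_rankOne, b.orthonormal.1 i, mul_one]

section WeightedShift

variable (e : HilbertBasis ℤ 𝕜 E)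

theorem isUnit_of_apply_eq_smul_succ [CompleteSpace E] {V : E →L[𝕜] E} {w : ℤ → 𝕜} {c d : 𝕜}
    (hc : c ≠ 0) (hd : d ≠ 0) (hw : ∀ n, w n = c ∨ w n = d)
    (hV : ∀ n, V (e n) = w n • e (n + 1)) : IsUnit V := by
  have hadj := e.adjoint_apply_eq_of_apply_eq (σ := (· + 1)) (add_left_injective 1) hV
  have hconj : ∀ {a : 𝕜}, a ≠ 0 → conj a ≠ 0 := fun ha => (map_ne_zero _).2 ha
  refine isUnit_of_isUnit_mul_of_isUnit_mul_swap (y := V.adjoint) ?_ ?_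
  · refine e.isUnit_of_apply_eq_smul_or (mul_ne_zero hc (hconj hc)) (mul_ne_zero hd (hconj hd))
      fun n => ?_
    have hn : (V * V.adjoint) (e n) = (w (n - 1) * conj (w (n - 1))) • e n := by
      conv_lhs => rw [← sub_add_cancel n 1]
      rw [mul_apply_eq_comp, hadj, map_smul, hV, smul_smul, mul_comm, sub_add_cancel]
    rcases hw (n - 1) with h | h <;> simp only [hn, h, true_or, or_true]
  · refine e.isUnit_of_apply_eq_smul_or (mul_ne_zero (hconj hc) hc) (mul_ne_zero (hconj hd) hd)
      fun n => ?_
    have hn : (V.adjoint * V) (e n) = (conj (w n) * w n) • e n := by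
      rw [mul_apply_eq_comp, hV, map_smul, hadj, smul_smul, mul_comm]
    rcases hw n with h | h <;> simp only [hn, h, true_or, or_true]

theorem norm_pow_apply_le {U : E →L[𝕜] E} {α : ℝ} (hα : 1 ≤ α)
    (hU : ∀ n, U (e (n + 1)) = (if n < 0 then (α : 𝕜)⁻¹ else α) • e n) (k : ℕ) (j : ℤ) :
    ‖(U ^ k) (e j)‖ ≤ α ^ (2 * j.toNat) * α⁻¹ ^ k := by
  have hα0 : 0 < α := zero_lt_one.trans_le hα
  induction k generalizing j with
  | zero =>
    rw [pow_zero, one_apply_eq_self, e.orthonormal.1 j, pow_zero, mul_one]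
    exact one_le_pow₀ hα
  | succ k ih =>
    rw [pow_succ, mul_apply_eq_comp, ← sub_add_cancel j 1, hU, map_smul, norm_smul,
      sub_add_cancel]
    by_cases hj : j - 1 < 0
    · have ht : j.toNat = (j - 1).toNat := by omega
      rw [if_pos hj, norm_inv, RCLike.norm_ofReal, abs_of_pos hα0, ht]
      calc α⁻¹ * ‖(U ^ k) (e (j - 1))‖ ≤ α⁻¹ * (α ^ (2 * (j - 1).toNat) * α⁻¹ ^ k) :=
            mul_le_mul_of_nonneg_left (ih _) (inv_nonneg.2 hα0.le)
        _ = _ := by ring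
    · have ht : j.toNat = (j - 1).toNat + 1 := by omega
      rw [if_neg hj, RCLike.norm_ofReal, abs_of_pos hα0, ht]
      calc α * ‖(U ^ k) (e (j - 1))‖ ≤ α * (α ^ (2 * (j - 1).toNat) * α⁻¹ ^ k) :=
            mul_le_mul_of_nonneg_left (ih _) hα0.le
        _ = _ := by rw [mul_add, pow_add, pow_succ α⁻¹]; field_simp

theorem tendsto_norm_pow_apply {U : E →L[𝕜] E} {α : ℝ} (hα : 1 < α)
    (hU : ∀ n, U (e (n + 1)) = (if n < 0 then (α : 𝕜)⁻¹ else α) • e n) (j : ℤ) :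
    Tendsto (fun k : ℕ => ‖(U ^ k) (e j)‖) atTop (𝓝 0) := by
  have hgeom := (tendsto_pow_atTop_nhds_zero_of_lt_one (inv_nonneg.2 (zero_le_one.trans hα.le))
    (inv_lt_one_of_one_lt₀ hα)).const_mul (α ^ (2 * j.toNat))
  rw [mul_zero] at hgeom
  exact squeeze_zero (fun _ => norm_nonneg _) (e.norm_pow_apply_le hα.le hU · j) hgeom

end WeightedShift

end HilbertBasis

theorem stmt1_general
    {H : Type*} [NormedAddCommGroup H] [InnerProductSpace ℂ H] [CompleteSpace H]
    (e : HilbertBasis ℤ ℂ H)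
    (α : ℝ) (hα : 1 < α)
    (V : H →L[ℂ] H)
    (hV : ∀ n : ℤ, V (e n) = if n < 0 then (α : ℂ) • e (n + 1) else (α : ℂ)⁻¹ • e (n + 1))
    (P : ℕ → (H →L[ℂ] H))
    (hP₁ : ∀ (m : ℕ) (j : ℤ), |j| ≤ (m : ℤ) → P m (e j) = e j)
    (hP₂ : ∀ (m : ℕ) (j : ℤ), (m : ℤ) < |j| → P m (e j) = 0) :
    ∃ Vinv : H →L[ℂ] H, V * Vinv = 1 ∧ Vinv * V = 1 ∧
      ∀ m : ℕ, Tendsto (fun k : ℕ => ‖(Vinv ^ k) * P m‖) atTop (𝓝 0) := by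
  have hα0 : (α : ℂ) ≠ 0 := Complex.ofReal_ne_zero.2 (by linarith)
  set w : ℤ → ℂ := fun n => if n < 0 then (α : ℂ) else (α : ℂ)⁻¹
  have hVw : ∀ n, V (e n) = w n • e (n + 1) := fun n => by rw [hV, ite_smul]
  obtain ⟨⟨_, U, hVU, hUV⟩, rfl⟩ := e.isUnit_of_apply_eq_smul_succ hα0 (inv_ne_zero hα0)
    (fun n => ite_eq_or_eq _ _ _) hVw
  refine ⟨U, hVU, hUV, fun m => ?_⟩
  have hU : ∀ n, U (e (n + 1)) = (if n < 0 then (α : ℂ)⁻¹ else α) • e n := fun n => by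
    have hn := congr($hUV (e n))
    rw [mul_apply_eq_comp, hVw, map_smul, one_apply_eq_self] at hn
    rw [← hn, smul_smul]
    by_cases h : n < 0 <;> simp [w, h, hα0]
  rw [← e.sum_rankOne_eq_of_apply_eq_ite (Finset.Icc (-(m : ℤ)) m) (P := P m) fun j => ?_]
  · have hsum := tendsto_finsetSum (Finset.Icc (-(m : ℤ)) m) fun j _ =>
      e.tendsto_norm_pow_apply hα hU j
    rw [Finset.sum_const_zero] at hsum
    exact squeeze_zero (fun _ => norm_nonneg _) (fun k => e.norm_mul_le_sum_norm_apply _ _) hsum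
  · split_ifs with hj <;> rw [Finset.mem_Icc, ← abs_le] at hj
    exacts [hP₁ m j hj, hP₂ m j (not_le.1 hj)]

theorem stmt1
    {H : Type*} [NormedAddCommGroup H] [InnerProductSpace ℂ H] [CompleteSpace H]
    [TopologicalSpace.SeparableSpace H]
    (e : HilbertBasis ℤ ℂ H)
    (α : ℝ) (hα : 1 < α)
    (V : H →L[ℂ] H)
    (hV : ∀ n : ℤ, V (e n) = if n < 0 then (α : ℂ) • e (n + 1) else (α : ℂ)⁻¹ • e (n + 1))
    (P : ℕ → (H →L[ℂ] H))
    (hP₁ : ∀ (m : ℕ) (j : ℤ), |j| ≤ (m : ℤ) → P m (e j) = e j)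
    (hP₂ : ∀ (m : ℕ) (j : ℤ), (m : ℤ) < |j| → P m (e j) = 0) :
    ∃ Vinv : H →L[ℂ] H, V * Vinv = 1 ∧ Vinv * V = 1 ∧
      ∀ m : ℕ, Tendsto (fun k : ℕ => ‖(Vinv ^ k) * P m‖) atTop (𝓝 0) :=
  stmt1_general e α hα V hV P hP₁ hP₂
end

section
/- Let H be a separable Hilbert space with orthonormal basis (e_j)_{j∈ℤ}. For i > 0 define W_i by W_i(e_j) = (i/(i+1))·e_{j+1} for j ≥ 0 and W_i(e_j) = ((i+1)/i)·e_{j+1} for j < 0; set W_0 = I and W_i = W_{-i}^{-1} for i < 0. Then for every i ≥ 0, every m ∈ ℕ, and every l > m, the operator norm satisfies ‖W_{i+l} W_{i+l-1} ⋯ W_{i+1} P_m‖ = (i+m+1)^2 / ((i+1)(i+l+1)), where P_m is the orthogonal projection onto span{e_{-m},...,e_m}. -/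
/-!
Every factor `W_{n+1}` is `D_{n+1}⁻¹ S D_n`, where `S` is the unweighted shift and `D_n` is
diagonal with entries the potential `g n j = (n + 1 + max (-j) 0)² / (n + 1)`: the weight of
`W_{n+1}` at `e_j` is `g n j / g (n+1) (j+1)`. Hence the product `W_{i+l} ⋯ W_{i+1}` telescopes
to the weighted shift `e_j ↦ (g i j / g (i+l) (j+l)) • e_{j+l}`. After `P_m`, only `|j| ≤ m < l`
survive, where `j + l ≥ 0` makes the denominator `i + l + 1`; the potential is antitone in `j`,
so the largest weight sits at `j = -m`. An operator sending an orthonormal basis to multiples of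
an orthonormal family, finitely many of them nonzero, has norm the largest modulus of those
multiples.
-/

section OrthonormalImage

variable {ι 𝕜 E F : Type*} [RCLike 𝕜] [NormedAddCommGroup E] [InnerProductSpace 𝕜 E]
  [NormedAddCommGroup F] [InnerProductSpace 𝕜 F]

theorem HilbertBasis.opNorm_le_of_apply_eq_smul (e : HilbertBasis ι 𝕜 E) {f : ι → F}
    (hf : Orthonormal 𝕜 f) (A : E →L[𝕜] F) (S : Finset ι) (c : ι → 𝕜)
    (hA : ∀ j ∈ S, A (e j) = c j • f j) (hA₀ : ∀ j ∉ S, A (e j) = 0) {C : ℝ} (hC₀ : 0 ≤ C)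
    (hC : ∀ j ∈ S, ‖c j‖ ≤ C) : ‖A‖ ≤ C := by
  refine A.opNorm_le_bound hC₀ fun x => ?_
  have hAx : A x = ∑ j ∈ S, (e.repr x j * c j) • f j := by
    have hsum : HasSum (fun j => e.repr x j • A (e j)) (A x) := by
      simpa only [map_smul] using (e.hasSum_repr x).mapL A
    rw [hsum.unique (hasSum_sum_of_ne_finset_zero fun j hj => by rw [hA₀ j hj, smul_zero])]
    exact Finset.sum_congr rfl fun j hj => by rw [hA j hj, smul_smul]
  have hsq : ‖A x‖ ^ 2 ≤ (C * ‖x‖) ^ 2 :=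
    calc ‖A x‖ ^ 2 = ∑ j ∈ S, ‖e.repr x j‖ ^ 2 * ‖c j‖ ^ 2 := by
          simpa only [hAx, LinearIsometry.toSpanSingleton_apply, norm_mul, mul_pow] using
            hf.orthogonalFamily.norm_sum (fun j => e.repr x j * c j) S
      _ ≤ ∑ j ∈ S, ‖e.repr x j‖ ^ 2 * C ^ 2 := by
          gcongr with j hj
          exact hC j hj
      _ = C ^ 2 * ∑ j ∈ S, ‖inner 𝕜 (e j) x‖ ^ 2 := by
          simp only [Finset.mul_sum, e.repr_apply_apply, mul_comm]
      _ ≤ C ^ 2 * ‖x‖ ^ 2 := by gcongr; exact e.orthonormal.sum_inner_products_le x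
      _ = (C * ‖x‖) ^ 2 := by ring
  exact le_of_pow_le_pow_left₀ two_ne_zero (by positivity) hsq

theorem HilbertBasis.opNorm_eq_of_apply_eq_smul (e : HilbertBasis ι 𝕜 E) {f : ι → F}
    (hf : Orthonormal 𝕜 f) (A : E →L[𝕜] F) (S : Finset ι) (c : ι → 𝕜)
    (hA : ∀ j ∈ S, A (e j) = c j • f j) (hA₀ : ∀ j ∉ S, A (e j) = 0) {j₀ : ι} (hj₀ : j₀ ∈ S)
    (hmax : ∀ j ∈ S, ‖c j‖ ≤ ‖c j₀‖) : ‖A‖ = ‖c j₀‖ := by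
  refine le_antisymm (e.opNorm_le_of_apply_eq_smul hf A S c hA hA₀ (norm_nonneg _) hmax) ?_
  calc ‖c j₀‖ = ‖A (e j₀)‖ := by rw [hA j₀ hj₀, norm_smul, hf.1, mul_one]
    _ ≤ ‖A‖ * ‖e j₀‖ := A.le_opNorm _
    _ = ‖A‖ := by rw [e.orthonormal.1, mul_one]

end OrthonormalImage

theorem prod_shifts_apply_of_telescoping {𝕜 E : Type*} [Field 𝕜] [AddCommGroup E] [Module 𝕜 E]
    [TopologicalSpace E] (W : ℤ → E →L[𝕜] E) (e : ℤ → E) (g : ℕ → ℤ → 𝕜)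
    (hg : ∀ n j, g n j ≠ 0)
    (hW : ∀ (n : ℕ) (j : ℤ), W ((n : ℤ) + 1) (e j) = (g n j / g (n + 1) (j + 1)) • e (j + 1))
    (i l : ℕ) (j : ℤ) :
    ((List.range l).map (fun t : ℕ => W ((i : ℤ) + (l : ℤ) - (t : ℤ)))).prod (e j)
      = (g i j / g (i + l) (j + l)) • e (j + l) := by
  induction l generalizing i j with
  | zero => simp [div_self (hg i j)]
  | succ l ih =>
    have hsplit : ((List.range (l + 1)).map
          (fun t : ℕ => W ((i : ℤ) + ((l + 1 : ℕ) : ℤ) - (t : ℤ)))).prod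
        = ((List.range l).map (fun t : ℕ => W (((i + 1 : ℕ) : ℤ) + (l : ℤ) - (t : ℤ)))).prod
          * W ((i : ℤ) + 1) := by
      rw [List.range_succ, List.map_append, List.prod_append]
      congr 1
      · exact congrArg _ (List.map_congr_left fun t _ => by push_cast; ring_nf)
      · simp only [List.map_cons, List.map_nil, List.prod_cons, List.prod_nil, mul_one]
        push_cast
        ring_nf
    rw [hsplit, mul_apply_eq_comp, hW, map_smul, ih, smul_smul, div_mul_div_cancel₀ (hg _ _)]
    push_cast
    ring_nf

noncomputable def shiftPotential (n : ℕ) (j : ℤ) : ℝ :=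
  ((n : ℝ) + 1 + max (-(j : ℝ)) 0) ^ 2 / ((n : ℝ) + 1)

theorem shiftPotential_pos (n : ℕ) (j : ℤ) : 0 < shiftPotential n j := by
  unfold shiftPotential
  positivity

theorem shiftPotential_antitone (n : ℕ) : Antitone (shiftPotential n) := fun j k hjk => by
  unfold shiftPotential
  gcongr

theorem shiftPotential_of_nonneg (n : ℕ) {j : ℤ} (hj : 0 ≤ j) : shiftPotential n j = n + 1 := by
  have : max (-(j : ℝ)) 0 = 0 := max_eq_right (by simpa using hj)
  rw [shiftPotential, this, add_zero, sq, mul_div_assoc, div_self (by positivity), mul_one]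

theorem shiftPotential_add_of_neg_le (n l : ℕ) {j : ℤ} (hj : -(l : ℤ) ≤ j) :
    shiftPotential (n + l) (j + l) = (n : ℝ) + l + 1 := by
  rw [shiftPotential_of_nonneg _ (by omega)]
  push_cast
  rfl

theorem shiftPotential_neg_natCast (n m : ℕ) :
    shiftPotential n (-(m : ℤ)) = ((n : ℝ) + m + 1) ^ 2 / ((n : ℝ) + 1) := by
  rw [shiftPotential, Int.cast_neg, neg_neg, Int.cast_natCast, max_eq_left (by positivity)]
  ring_nf

theorem shiftPotential_div_succ (n : ℕ) (j : ℤ) :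
    shiftPotential n j / shiftPotential (n + 1) (j + 1)
      = if 0 ≤ j then ((n : ℝ) + 1) / ((n : ℝ) + 1 + 1) else ((n : ℝ) + 1 + 1) / ((n : ℝ) + 1) := by
  split_ifs with hj
  · rw [shiftPotential_of_nonneg n hj, shiftPotential_of_nonneg (n + 1) (by omega)]
    push_cast; ring
  · have hj' : (j : ℝ) ≤ -1 := by exact_mod_cast (by omega : j ≤ -1)
    have h₀ : (n : ℝ) + 1 + max (-(j : ℝ)) 0 = (n : ℝ) + 1 - j := by
      rw [max_eq_left (by linarith)]
      ring
    have h₁ : ((n + 1 : ℕ) : ℝ) + 1 + max (-((j + 1 : ℤ) : ℝ)) 0 = (n : ℝ) + 1 - j := by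
      push_cast
      rw [max_eq_left (by linarith)]
      ring
    have hpos : (0 : ℝ) < (n : ℝ) + 1 - j := by linarith
    rw [shiftPotential, shiftPotential, h₀, h₁]
    field_simp
    push_cast
    ring

theorem stmt2_general
    {H : Type*} [NormedAddCommGroup H] [InnerProductSpace ℂ H]
    (e : HilbertBasis ℤ ℂ H)
    (W : ℤ → (H →L[ℂ] H))
    (hWpos : ∀ i : ℤ, 0 < i → ∀ j : ℤ,
      W i (e j) = if 0 ≤ j then (((i : ℂ)) / ((i : ℂ) + 1)) • e (j + 1)
        else ((((i : ℂ) + 1)) / (i : ℂ)) • e (j + 1))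
    (P : ℕ → (H →L[ℂ] H))
    (hP₁ : ∀ (m : ℕ) (j : ℤ), |j| ≤ (m : ℤ) → P m (e j) = e j)
    (hP₂ : ∀ (m : ℕ) (j : ℤ), (m : ℤ) < |j| → P m (e j) = 0) :
    ∀ (i m l : ℕ), m < l →
      ‖(((List.range l).map (fun t : ℕ => W ((i : ℤ) + (l : ℤ) - (t : ℤ)))).prod) * P m‖
        = ((i : ℝ) + (m : ℝ) + 1) ^ 2 / (((i : ℝ) + 1) * ((i : ℝ) + (l : ℝ) + 1)) := by
  intro i m l hml
  set g : ℕ → ℤ → ℂ := fun n j => (shiftPotential n j : ℂ)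
  have hW : ∀ (n : ℕ) (j : ℤ), W ((n : ℤ) + 1) (e j) = (g n j / g (n + 1) (j + 1)) • e (j + 1) := by
    intro n j
    rw [hWpos _ (by positivity), ← Complex.ofReal_div, shiftPotential_div_succ]
    split_ifs <;> push_cast <;> rfl
  have hprod := prod_shifts_apply_of_telescoping W e g
    (fun n j => Complex.ofReal_ne_zero.mpr (shiftPotential_pos n j).ne') hW i l
  have hnorm : ∀ j,
      ‖g i j / g (i + l) (j + l)‖ = shiftPotential i j / shiftPotential (i + l) (j + l) := by
    intro j
    rw [← Complex.ofReal_div, Complex.norm_of_nonneg]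
    exact div_nonneg (shiftPotential_pos _ _).le (shiftPotential_pos _ _).le
  have hmem : -(m : ℤ) ∈ Finset.Icc (-(m : ℤ)) m := by simp
  have hmax : ∀ j ∈ Finset.Icc (-(m : ℤ)) m,
      ‖g i j / g (i + l) (j + l)‖ ≤ ‖g i (-m) / g (i + l) (-m + l)‖ := fun j hj => by
    rw [hnorm, hnorm, shiftPotential_add_of_neg_le i l (by grind),
      shiftPotential_add_of_neg_le i l (by omega)]
    gcongr
    exact shiftPotential_antitone i (Finset.mem_Icc.mp hj).1
  rw [e.opNorm_eq_of_apply_eq_smul (e.orthonormal.comp _ (add_left_injective (l : ℤ))) _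
      (Finset.Icc (-(m : ℤ)) m) (fun j => g i j / g (i + l) (j + l))
      (fun j hj => by
        rw [mul_apply_eq_comp, hP₁ m j (abs_le.mpr (Finset.mem_Icc.mp hj)), hprod]
        rfl)
      (fun j hj => by
        rw [mul_apply_eq_comp, hP₂ m j (not_le.mp fun h => hj (Finset.mem_Icc.mpr (abs_le.mp h))),
          map_zero])
      hmem hmax, hnorm, shiftPotential_add_of_neg_le i l (by omega), shiftPotential_neg_natCast,
    div_div]

theorem stmt2
    {H : Type*} [NormedAddCommGroup H] [InnerProductSpace ℂ H] [CompleteSpace H]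
    [TopologicalSpace.SeparableSpace H]
    (e : HilbertBasis ℤ ℂ H)
    (W : ℤ → (H →L[ℂ] H))
    (hW0 : W 0 = 1)
    (hWpos : ∀ i : ℤ, 0 < i → ∀ j : ℤ,
      W i (e j) = if 0 ≤ j then (((i : ℂ)) / ((i : ℂ) + 1)) • e (j + 1)
        else ((((i : ℂ) + 1)) / (i : ℂ)) • e (j + 1))
    (hWneg : ∀ i : ℤ, i < 0 → W i * W (-i) = 1 ∧ W (-i) * W i = 1)
    (P : ℕ → (H →L[ℂ] H))
    (hP₁ : ∀ (m : ℕ) (j : ℤ), |j| ≤ (m : ℤ) → P m (e j) = e j)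
    (hP₂ : ∀ (m : ℕ) (j : ℤ), (m : ℤ) < |j| → P m (e j) = 0) :
    ∀ (i m l : ℕ), m < l →
      ‖(((List.range l).map (fun t : ℕ => W ((i : ℤ) + (l : ℤ) - (t : ℤ)))).prod) * P m‖
        = ((i : ℝ) + (m : ℝ) + 1) ^ 2 / (((i : ℝ) + 1) * ((i : ℝ) + (l : ℝ) + 1)) :=
  stmt2_general e W hWpos P hP₁ hP₂
end

section
/- With W_i as in the previous context (W_i(e_j) = (i/(i+1))e_{j+1} for j≥0, ((i+1)/i)e_{j+1} for j<0 when i>0; W_0=I; W_i = W_{-i}^{-1} for i<0), for every i ∈ ℤ, every m ∈ ℕ, and every strictly increasing arithmetic-like sequence, the series ∑_{l=1}^∞ ‖W_{i+l} W_{i+l-1} ⋯ W_{i+1} P_m‖² converges. -/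
/-!
Each `W k` maps a basis vector to a scalar multiple of a neighbouring one, hence so does the
product `W (i+l+1) ⋯ W (i+1)`, and only the size of that scalar matters. Weight the basis vector
`e j` by `g j = 4 ^ max (-j) 0`, which absorbs the factors `(k+1)/k ≤ 2` picked up at negative
positions, and the index `k` by `φ k = k + 1` (by `4 ^ (-k)` for `k < 0`, so that the steps
with `k ≤ 0` may cost a factor `4`). Then every step satisfies `‖c‖ g j' φ k ≤ φ (k-1) g j`,
which telescopes along the product: on the range of `P m` its norm is
`O(1 / φ (i+l+1)) = O(1/l)`, whose square is summable.
-/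

section ShiftProd

variable {𝕜 E ι : Type*} [NormedField 𝕜] [NormedAddCommGroup E] [NormedSpace 𝕜 E]

def shiftProd (S : ℤ → E →L[𝕜] E) (a : ℤ) (n : ℕ) : E →L[𝕜] E :=
  ((List.range n).map fun t : ℕ => S (a + n - t)).prod

theorem shiftProd_zero (S : ℤ → E →L[𝕜] E) (a : ℤ) : shiftProd S a 0 = 1 := rfl

theorem shiftProd_succ (S : ℤ → E →L[𝕜] E) (a : ℤ) (n : ℕ) :
    shiftProd S a (n + 1) = shiftProd S (a + 1) n * S (a + 1) := by
  simp only [shiftProd, List.range_succ, List.map_append, List.prod_append, List.map_cons,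
    List.map_nil, List.prod_cons, List.prod_nil, mul_one]
  congr 3 <;> push_cast <;> ring_nf

theorem exists_shiftProd_apply_eq_smul {S : ℤ → E →L[𝕜] E} {v : ι → E} {g : ι → ℝ}
    {φ : ℤ → ℝ} (hstep : ∀ k j, ∃ (c : 𝕜) (j' : ι),
      S k (v j) = c • v j' ∧ ‖c‖ * g j' * φ k ≤ φ (k - 1) * g j)
    (a : ℤ) (n : ℕ) (j : ι) : ∃ (c : 𝕜) (j' : ι),
      shiftProd S a n (v j) = c • v j' ∧ ‖c‖ * g j' * φ (a + n) ≤ φ a * g j := by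
  induction n generalizing a j with
  | zero => exact ⟨1, j, by simp [shiftProd_zero], by simp [mul_comm]⟩
  | succ n ih =>
    obtain ⟨c₀, j₁, hS, hc₀⟩ := hstep (a + 1) j
    obtain ⟨c₁, j', hprod, hc₁⟩ := ih (a + 1) j₁
    refine ⟨c₀ * c₁, j', ?_, ?_⟩
    · rw [shiftProd_succ, mul_apply_eq_comp, hS, map_smul, hprod, smul_smul]
    · rw [add_sub_cancel_right] at hc₀
      calc ‖c₀ * c₁‖ * g j' * φ (a + (n + 1 : ℕ))
          = ‖c₀‖ * (‖c₁‖ * g j' * φ (a + 1 + n)) := by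
            rw [norm_mul]; push_cast; ring_nf
        _ ≤ ‖c₀‖ * (φ (a + 1) * g j₁) := by gcongr
        _ = ‖c₀‖ * g j₁ * φ (a + 1) := by ring
        _ ≤ φ a * g j := hc₀

theorem norm_shiftProd_apply_le {S : ℤ → E →L[𝕜] E} {v : ι → E} {g : ι → ℝ}
    {φ : ℤ → ℝ} (hstep : ∀ k j, ∃ (c : 𝕜) (j' : ι),
      S k (v j) = c • v j' ∧ ‖c‖ * g j' * φ k ≤ φ (k - 1) * g j)
    (hv : ∀ j, ‖v j‖ = 1) (hg : ∀ j, 1 ≤ g j) (hφ : ∀ k, 0 < φ k)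
    (a : ℤ) (n : ℕ) (j : ι) :
    ‖shiftProd S a n (v j)‖ ≤ φ a * g j / φ (a + n) := by
  obtain ⟨c, j', happly, hc⟩ := exists_shiftProd_apply_eq_smul hstep a n j
  rw [happly, norm_smul, hv, mul_one, le_div_iff₀ (hφ _)]
  calc ‖c‖ * φ (a + n) ≤ ‖c‖ * g j' * φ (a + n) := by
        gcongr
        · exact (hφ _).le
        · exact le_mul_of_one_le_right (norm_nonneg c) (hg j')
    _ ≤ φ a * g j := hc

end ShiftProd

namespace HilbertBasis

variable {ι 𝕜 E F : Type*} [RCLike 𝕜] [NormedAddCommGroup E] [InnerProductSpace 𝕜 E]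
  [NormedAddCommGroup F] [NormedSpace 𝕜 F] (b : HilbertBasis ι 𝕜 E) (s : Finset ι)
  {P : E →L[𝕜] E}

theorem apply_eq_sum_repr_smul (hP_mem : ∀ j ∈ s, P (b j) = b j)
    (hP_not_mem : ∀ j ∉ s, P (b j) = 0) (x : E) :
    P x = ∑ j ∈ s, b.repr x j • b j := by
  have hsum : HasSum (fun j => b.repr x j • P (b j)) (P x) := by
    simpa only [map_smul] using (b.hasSum_repr x).mapL P
  rw [hsum.unique <| hasSum_sum_of_ne_finset_zero fun j hj => by
    rw [hP_not_mem j hj, smul_zero]]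
  exact Finset.sum_congr rfl fun j hj => by rw [hP_mem j hj]

theorem norm_comp_le_sum (hP_mem : ∀ j ∈ s, P (b j) = b j)
    (hP_not_mem : ∀ j ∉ s, P (b j) = 0) (T : E →L[𝕜] F) :
    ‖T.comp P‖ ≤ ∑ j ∈ s, ‖T (b j)‖ := by
  refine ContinuousLinearMap.opNorm_le_bound _ (by positivity) fun x => ?_
  rw [ContinuousLinearMap.comp_apply, b.apply_eq_sum_repr_smul s hP_mem hP_not_mem, map_sum,
    Finset.sum_mul]
  refine (norm_sum_le _ _).trans (Finset.sum_le_sum fun j _ => ?_)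
  rw [map_smul, norm_smul, mul_comm]
  gcongr
  rw [← b.repr.norm_map x]
  exact lp.norm_apply_le_norm (by norm_num) _ j

end HilbertBasis

noncomputable section Weights

def basisWeight (j : ℤ) : ℝ := 4 ^ (-j).toNat

def shiftWeight (k : ℤ) : ℝ := if 0 ≤ k then k + 1 else basisWeight k

def shiftRatio (n : ℕ) : ℝ := (n + 1) / (n + 2)

theorem basisWeight_pos (j : ℤ) : 0 < basisWeight j := by
  unfold basisWeight; positivity

theorem one_le_basisWeight (j : ℤ) : 1 ≤ basisWeight j := one_le_pow₀ (by norm_num)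

theorem basisWeight_of_nonneg {j : ℤ} (hj : 0 ≤ j) : basisWeight j = 1 := by
  rw [basisWeight, Int.toNat_of_nonpos (by omega), pow_zero]

theorem basisWeight_sub_one {j : ℤ} (hj : j ≤ 0) : basisWeight (j - 1) = 4 * basisWeight j := by
  rw [basisWeight, basisWeight, show (-(j - 1)).toNat = (-j).toNat + 1 by omega, pow_succ,
    mul_comm]

theorem basisWeight_le_of_neg_le {j : ℤ} {m : ℕ} (hj : -(m : ℤ) ≤ j) :
    basisWeight j ≤ 4 ^ m :=
  pow_le_pow_right₀ (by norm_num) (by omega)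

theorem shiftWeight_natCast (n : ℕ) : shiftWeight n = n + 1 := by
  simp [shiftWeight]

theorem shiftWeight_sub_one {k : ℤ} (hk : k ≤ 0) : shiftWeight (k - 1) = 4 * shiftWeight k := by
  rw [shiftWeight, if_neg (by omega), basisWeight_sub_one hk, shiftWeight]
  split_ifs with h
  · rw [basisWeight_of_nonneg h, show k = 0 by omega]; norm_num
  · rfl

theorem shiftWeight_pos (k : ℤ) : 0 < shiftWeight k := by
  unfold shiftWeight
  split_ifs with h
  · have : (0 : ℝ) ≤ k := by exact_mod_cast h
    linarith
  · exact basisWeight_pos k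

theorem natCast_add_one_le_shiftWeight_neg (n : ℕ) : (n : ℝ) + 1 ≤ shiftWeight (-n) := by
  rcases n.eq_zero_or_pos with rfl | hn
  · simp [shiftWeight]
  · rw [shiftWeight, if_neg (by omega), basisWeight, neg_neg, Int.toNat_natCast]
    exact_mod_cast Nat.lt_pow_self (by norm_num : 1 < 4)

theorem summable_inv_shiftWeight_sq : Summable fun k : ℤ => (shiftWeight k ^ 2)⁻¹ := by
  have hsucc : Summable fun n : ℕ => (((n : ℝ) + 1) ^ 2)⁻¹ := by
    simpa using (summable_nat_add_iff 1).mpr (Real.summable_nat_pow_inv.mpr one_lt_two)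
  refine summable_int_iff_summable_nat_and_neg.mpr ⟨?_, ?_⟩
  · simpa [shiftWeight_natCast] using hsucc
  · refine hsucc.of_nonneg_of_le (fun n => by positivity) fun n => ?_
    gcongr
    exact natCast_add_one_le_shiftWeight_neg n

theorem shiftRatio_pos (n : ℕ) : 0 < shiftRatio n := by
  unfold shiftRatio; positivity

theorem shiftRatio_le_one (n : ℕ) : shiftRatio n ≤ 1 := by
  rw [shiftRatio, div_le_one (by positivity)]; linarith

theorem inv_shiftRatio_le_two (n : ℕ) : (shiftRatio n)⁻¹ ≤ 2 := by
  rw [shiftRatio, inv_div, div_le_iff₀ (by positivity)]; linarith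

theorem shiftRatio_mul (n : ℕ) : shiftRatio n * (n + 2) = n + 1 :=
  div_mul_cancel₀ _ (by positivity)

end Weights

section WeightedShift

variable {H : Type*} [NormedAddCommGroup H] [InnerProductSpace ℂ H]

structure IsWeightedShiftFamily (e : HilbertBasis ℤ ℂ H) (W : ℤ → H →L[ℂ] H) :
    Prop where
  zero : W 0 = 1
  pos : ∀ i : ℤ, 0 < i → ∀ j : ℤ,
    W i (e j) = if 0 ≤ j then ((i : ℂ) / ((i : ℂ) + 1)) • e (j + 1)
      else (((i : ℂ) + 1) / (i : ℂ)) • e (j + 1)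
  neg_mul : ∀ i : ℤ, i < 0 → W i * W (-i) = 1

namespace IsWeightedShiftFamily

variable {e : HilbertBasis ℤ ℂ H} {W : ℤ → H →L[ℂ] H}

theorem apply_natCast_add_one (hW : IsWeightedShiftFamily e W) (n : ℕ) (j : ℤ) :
    W (n + 1) (e j) =
      ((if 0 ≤ j then shiftRatio n else (shiftRatio n)⁻¹ : ℝ) : ℂ) • e (j + 1) := by
  rw [hW.pos _ (by positivity), shiftRatio]
  split_ifs <;> congr 1 <;> push_cast <;> field_simp <;> ring

theorem exists_apply_natCast_add_one (hW : IsWeightedShiftFamily e W) (n : ℕ) (j : ℤ) :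
    ∃ (c : ℂ) (j' : ℤ), W (n + 1) (e j) = c • e j' ∧
      ‖c‖ * basisWeight j' * (n + 2) ≤ (n + 1) * basisWeight j := by
  refine ⟨_, j + 1, hW.apply_natCast_add_one n j, ?_⟩
  have hr := shiftRatio_pos n
  split_ifs with hj
  · rw [Complex.norm_of_nonneg hr.le, basisWeight_of_nonneg hj,
      basisWeight_of_nonneg (by omega), mul_one, mul_one, shiftRatio_mul]
  · have hj1 := basisWeight_sub_one (j := j + 1) (by omega)
    rw [add_sub_cancel_right] at hj1
    rw [Complex.norm_of_nonneg (inv_pos.mpr hr).le, hj1]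
    have hratio : (shiftRatio n)⁻¹ * (n + 2) ≤ 4 * (n + 1) := by
      nlinarith [inv_shiftRatio_le_two n]
    calc (shiftRatio n)⁻¹ * basisWeight (j + 1) * (n + 2)
        = (shiftRatio n)⁻¹ * (n + 2) * basisWeight (j + 1) := by ring
      _ ≤ 4 * (n + 1) * basisWeight (j + 1) :=
          mul_le_mul_of_nonneg_right hratio (basisWeight_pos _).le
      _ = (n + 1) * (4 * basisWeight (j + 1)) := by ring

theorem exists_apply_of_nonpos (hW : IsWeightedShiftFamily e W) {k : ℤ} (hk : k ≤ 0)
    (j : ℤ) : ∃ (c : ℂ) (j' : ℤ),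
      W k (e j) = c • e j' ∧ ‖c‖ * basisWeight j' ≤ 4 * basisWeight j := by
  obtain rfl | hk := hk.eq_or_lt
  · refine ⟨1, j, by simp [hW.zero], ?_⟩
    rw [norm_one, one_mul]
    linarith [one_le_basisWeight j]
  obtain ⟨n, rfl⟩ : ∃ n : ℕ, k = -(n + 1) := ⟨(-k - 1).toNat, by omega⟩
  set c : ℝ := if 0 ≤ j - 1 then shiftRatio n else (shiftRatio n)⁻¹
  have hc : 0 < c := by unfold c; split_ifs <;> simp [shiftRatio_pos]
  have hinv : (c : ℂ) • W (-(n + 1)) (e j) = e (j - 1) := by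
    have h := hW.neg_mul (-(n + 1)) (by omega)
    rw [neg_neg] at h
    rw [← map_smul, ← sub_add_cancel j 1, ← hW.apply_natCast_add_one, add_sub_cancel_right,
      ← mul_apply_eq_comp, h, one_apply_eq_self]
  refine ⟨(c : ℂ)⁻¹, j - 1, (eq_inv_smul_iff₀ (by exact_mod_cast hc.ne')).mpr hinv, ?_⟩
  rw [← Complex.ofReal_inv, Complex.norm_of_nonneg (inv_pos.mpr hc).le]
  unfold c
  split_ifs with hj
  · rw [basisWeight_of_nonneg hj, basisWeight_of_nonneg (by omega)]
    linarith [inv_shiftRatio_le_two n]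
  · rw [inv_inv, basisWeight_sub_one (by omega)]
    have := shiftRatio_le_one n
    nlinarith [one_le_basisWeight j, shiftRatio_pos n]

theorem exists_apply_weighted (hW : IsWeightedShiftFamily e W) (k j : ℤ) :
    ∃ (c : ℂ) (j' : ℤ), W k (e j) = c • e j' ∧
      ‖c‖ * basisWeight j' * shiftWeight k ≤ shiftWeight (k - 1) * basisWeight j := by
  rcases le_or_gt k 0 with hk | hk
  · obtain ⟨c, j', happly, hc⟩ := hW.exists_apply_of_nonpos hk j
    refine ⟨c, j', happly, ?_⟩
    rw [shiftWeight_sub_one hk]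
    nlinarith [shiftWeight_pos k]
  · obtain ⟨n, rfl⟩ : ∃ n : ℕ, k = n + 1 := ⟨(k - 1).toNat, by omega⟩
    rw [add_sub_cancel_right, shiftWeight_natCast, ← Nat.cast_one, ← Nat.cast_add,
      shiftWeight_natCast]
    push_cast
    simpa only [add_assoc, one_add_one_eq_two] using hW.exists_apply_natCast_add_one n j

theorem norm_shiftProd_mul_le (hW : IsWeightedShiftFamily e W) {P : H →L[ℂ] H} (m : ℕ)
    (hP_mem : ∀ j : ℤ, |j| ≤ m → P (e j) = e j)
    (hP_not_mem : ∀ j : ℤ, m < |j| → P (e j) = 0)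
    (a : ℤ) (n : ℕ) :
    ‖shiftProd W a n * P‖ ≤ (2 * m + 1) * (shiftWeight a * 4 ^ m) / shiftWeight (a + n) := by
  set s := Finset.Icc (-(m : ℤ)) m
  have hcard : (s.card : ℝ) = 2 * m + 1 := by
    rw [Int.card_Icc, show (m : ℤ) + 1 - -m = ((2 * m + 1 : ℕ) : ℤ) by push_cast; ring,
      Int.toNat_natCast]
    push_cast; ring
  calc ‖shiftProd W a n * P‖ ≤ ∑ j ∈ s, ‖shiftProd W a n (e j)‖ :=
        e.norm_comp_le_sum s (fun j hj => hP_mem j (abs_le.mpr (Finset.mem_Icc.mp hj)))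
          (fun j hj => hP_not_mem j (by rw [Finset.mem_Icc] at hj; rw [lt_abs]; omega)) _
    _ ≤ ∑ j ∈ s, shiftWeight a * 4 ^ m / shiftWeight (a + n) :=
        Finset.sum_le_sum fun j hj =>
          (norm_shiftProd_apply_le hW.exists_apply_weighted e.orthonormal.1 one_le_basisWeight
            shiftWeight_pos a n j).trans <| by
              gcongr
              · exact (shiftWeight_pos _).le
              · exact (shiftWeight_pos _).le
              · exact basisWeight_le_of_neg_le (Finset.mem_Icc.mp hj).1
    _ = (2 * m + 1) * (shiftWeight a * 4 ^ m) / shiftWeight (a + n) := by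
        rw [Finset.sum_const, nsmul_eq_mul, hcard]; ring

end IsWeightedShiftFamily

end WeightedShift

open Filter Topology

theorem stmt3_general
    {H : Type*} [NormedAddCommGroup H] [InnerProductSpace ℂ H]
    (e : HilbertBasis ℤ ℂ H)
    (W : ℤ → (H →L[ℂ] H))
    (hW0 : W 0 = 1)
    (hWpos : ∀ i : ℤ, 0 < i → ∀ j : ℤ,
      W i (e j) = if 0 ≤ j then (((i : ℂ)) / ((i : ℂ) + 1)) • e (j + 1)
        else ((((i : ℂ) + 1)) / (i : ℂ)) • e (j + 1))
    (hWneg : ∀ i : ℤ, i < 0 → W i * W (-i) = 1 ∧ W (-i) * W i = 1)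
    (P : ℕ → (H →L[ℂ] H))
    (hP₁ : ∀ (m : ℕ) (j : ℤ), |j| ≤ (m : ℤ) → P m (e j) = e j)
    (hP₂ : ∀ (m : ℕ) (j : ℤ), (m : ℤ) < |j| → P m (e j) = 0) :
    ∀ (i : ℤ) (m : ℕ),
      Summable (fun l : ℕ =>
        ‖(((List.range (l + 1)).map (fun t : ℕ => W (i + ((l : ℤ) + 1) - (t : ℤ)))).prod) * P m‖ ^ 2) := by
  intro i m
  have hW : IsWeightedShiftFamily e W := ⟨hW0, hWpos, fun k hk => (hWneg k hk).1⟩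
  set C : ℝ := (2 * m + 1) * (shiftWeight i * 4 ^ m)
  have hsum : Summable fun l : ℕ => C ^ 2 * (shiftWeight (i + (l + 1 : ℕ)) ^ 2)⁻¹ :=
    (summable_inv_shiftWeight_sq.comp_injective fun a b h => by simpa using h).mul_left _
  refine hsum.of_nonneg_of_le (fun l => by positivity) fun l => ?_
  rw [← div_eq_mul_inv, ← div_pow, show ((List.range (l + 1)).map fun t : ℕ =>
    W (i + ((l : ℤ) + 1) - t)).prod = shiftProd W i (l + 1) by rw [shiftProd, Nat.cast_succ]]
  exact pow_le_pow_left₀ (norm_nonneg _)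
    (hW.norm_shiftProd_mul_le m (hP₁ m) (hP₂ m) i (l + 1)) 2

theorem stmt3
    {H : Type*} [NormedAddCommGroup H] [InnerProductSpace ℂ H] [CompleteSpace H]
    [TopologicalSpace.SeparableSpace H]
    (e : HilbertBasis ℤ ℂ H)
    (W : ℤ → (H →L[ℂ] H))
    (hW0 : W 0 = 1)
    (hWpos : ∀ i : ℤ, 0 < i → ∀ j : ℤ,
      W i (e j) = if 0 ≤ j then (((i : ℂ)) / ((i : ℂ) + 1)) • e (j + 1)
        else ((((i : ℂ) + 1)) / (i : ℂ)) • e (j + 1))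
    (hWneg : ∀ i : ℤ, i < 0 → W i * W (-i) = 1 ∧ W (-i) * W i = 1)
    (P : ℕ → (H →L[ℂ] H))
    (hP₁ : ∀ (m : ℕ) (j : ℤ), |j| ≤ (m : ℤ) → P m (e j) = e j)
    (hP₂ : ∀ (m : ℕ) (j : ℤ), (m : ℤ) < |j| → P m (e j) = 0) :
    ∀ (i : ℤ) (m : ℕ),
      Summable (fun l : ℕ =>
        ‖(((List.range (l + 1)).map (fun t : ℕ => W (i + ((l : ℤ) + 1) - (t : ℤ)))).prod) * P m‖ ^ 2) :=
  stmt3_general e W hW0 hWpos hWneg P hP₁ hP₂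
end

section
/- Let H be a separable Hilbert space with orthonormal basis (e_j)_{j∈ℤ}, and let W₁, W₂ be the operators defined by W₁(e_n) = 2e_{n+1} for n < 0, W₁(e_n) = (1/2)e_{n+1} for n ≥ 0, and W₂(e_n) = 3e_{n+1} for n < 0, W₂(e_n) = (1/3)e_{n+1} for n ≥ 0. Then for every m ∈ ℕ, ‖W₁^{k} W₂^{-2k} P_m‖ → 0 and ‖W₂^{2k} W₁^{-k} P_m‖ → 0 as k → ∞, where P_m is the orthogonal projection onto span{e_{-m},...,e_m}. -/
/-!
The weight of `W₁`, `W₂` at `n` is `a ^ (|n| - |n + 1|)` with `a = 2, 3`, so the weights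
telescope: `W ^ k` maps `e n` to `a ^ (|n| - |n + k|) • e (n + k)`, and a left inverse
`V` of `W` maps `e n` to `a ^ (|n| - |n - k|) • e (n - k)`. For `|j| ≤ m` this makes
`‖W₁ ^ k W₂⁻¹ ^ (2k) e j‖ ≤ 9 ^ m (2/9) ^ k` and `‖W₂ ^ (2k) W₁⁻¹ ^ k e j‖ ≤ 36 ^ m 2⁻¹ ^ k`,
and `P m` only sees the `2m + 1` vectors `e j` with `|j| ≤ m`.
-/

open Filter Topology

lemma ite_eq_zpow_abs_sub_abs {α : Type*} [DivInvMonoid α] (a : α) (n : ℤ) :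
    (if n < 0 then a else a⁻¹) = a ^ (|n| - |n + 1|) := by
  split_ifs with hn
  · rw [show |n| - |n + 1| = 1 by grind, zpow_one]
  · rw [show |n| - |n + 1| = -1 by grind, zpow_neg_one]

section WeightedShift

variable {𝕜 M : Type*} [DivisionRing 𝕜] [AddCommGroup M] [Module 𝕜 M] [TopologicalSpace M]
  {e : ℤ → M} {W V : M →L[𝕜] M} {a : 𝕜} {φ : ℤ → ℤ}

lemma weightedShift_pow_apply (hW : ∀ n, W (e n) = a ^ (φ n - φ (n + 1)) • e (n + 1))
    (ha : a ≠ 0) (k : ℕ) (n : ℤ) : (W ^ k) (e n) = a ^ (φ n - φ (n + k)) • e (n + k) := by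
  induction k generalizing n with
  | zero => simp
  | succ k ih =>
    rw [pow_succ, mul_apply_eq_comp, hW, map_smul, ih, smul_smul, ← zpow_add₀ ha,
      sub_add_sub_cancel, add_assoc n 1, add_comm (1 : ℤ), ← Nat.cast_succ]

lemma weightedShift_leftInv_pow_apply
    (hW : ∀ n, W (e n) = a ^ (φ n - φ (n + 1)) • e (n + 1)) (ha : a ≠ 0) (hVW : V * W = 1)
    (k : ℕ) (n : ℤ) : (V ^ k) (e n) = a ^ (φ n - φ (n - k)) • e (n - k) := by
  have h := congrArg (· (e (n - k))) (pow_mul_pow_eq_one k hVW)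
  simp only [mul_apply_eq_comp, weightedShift_pow_apply hW ha, map_smul,
    sub_add_cancel, one_apply_eq_self] at h
  rw [← h, smul_smul, ← zpow_add₀ ha, sub_add_sub_cancel', sub_self, zpow_zero, one_smul]

end WeightedShift

section HilbertBasis

variable {ι 𝕜 E F : Type*} [RCLike 𝕜] [NormedAddCommGroup E] [InnerProductSpace 𝕜 E]
  [NormedAddCommGroup F] [NormedSpace 𝕜 F]

lemma HilbertBasis.opNorm_le_card_mul (e : HilbertBasis ι 𝕜 E) (T : E →L[𝕜] F) (s : Finset ι)
    {C : ℝ} (hC : 0 ≤ C) (hT₀ : ∀ i ∉ s, T (e i) = 0) (hT : ∀ i ∈ s, ‖T (e i)‖ ≤ C) :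
    ‖T‖ ≤ s.card * C := by
  refine T.opNorm_le_bound (by positivity) fun x => ?_
  have hsum : HasSum (fun i => e.repr x i • T (e i)) (T x) := by
    simpa only [map_smul] using (e.hasSum_repr x).mapL T
  have hx : T x = ∑ i ∈ s, e.repr x i • T (e i) :=
    hsum.unique (hasSum_sum_of_ne_finset_zero fun i hi => by rw [hT₀ i hi, smul_zero])
  calc ‖T x‖ ≤ ∑ i ∈ s, ‖e.repr x i‖ * ‖T (e i)‖ := by
        rw [hx]; exact (norm_sum_le _ _).trans_eq (by simp only [norm_smul])
    _ ≤ ∑ _i ∈ s, ‖x‖ * C := by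
        refine Finset.sum_le_sum fun i hi => mul_le_mul ?_ (hT i hi) (norm_nonneg _) (norm_nonneg _)
        simpa using lp.norm_apply_le_norm two_ne_zero (e.repr x) i
    _ = s.card * C * ‖x‖ := by rw [Finset.sum_const, nsmul_eq_mul]; ring

lemma HilbertBasis.opNorm_mul_le_of_proj (e : HilbertBasis ℤ 𝕜 E) (A P : E →L[𝕜] E) (m : ℕ)
    {C : ℝ} (hC : 0 ≤ C) (hP₁ : ∀ j, |j| ≤ (m : ℤ) → P (e j) = e j)
    (hP₂ : ∀ j, (m : ℤ) < |j| → P (e j) = 0) (hA : ∀ j, |j| ≤ (m : ℤ) → ‖A (e j)‖ ≤ C) :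
    ‖A * P‖ ≤ (2 * m + 1) * C := by
  have hmem (j : ℤ) : j ∈ Finset.Icc (-(m : ℤ)) m ↔ |j| ≤ m := by
    rw [Finset.mem_Icc, abs_le]
  have hcard : ((Finset.Icc (-(m : ℤ)) m).card : ℝ) = 2 * m + 1 := by
    rw [Int.card_Icc, show (m : ℤ) + 1 - -m = ((2 * m + 1 : ℕ) : ℤ) by push_cast; ring,
      Int.toNat_natCast]
    push_cast; ring
  rw [← hcard]
  refine e.opNorm_le_card_mul _ _ hC (fun j hj => ?_) (fun j hj => ?_)
  · rw [hmem, not_le] at hj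
    rw [mul_apply_eq_comp, hP₂ j hj, map_zero]
  · rw [hmem] at hj
    rw [mul_apply_eq_comp, hP₁ j hj]
    exact hA j hj

end HilbertBasis

lemma three_zpow_mul_two_zpow_le {j : ℤ} {m k : ℕ} (hj : |j| ≤ m) :
    (3 : ℝ) ^ (|j| - |j - 2 * k|) * 2 ^ (|j - 2 * k| - |j - k|) ≤ 9 ^ m * (2 / 9) ^ k := by
  calc (3 : ℝ) ^ (|j| - |j - 2 * k|) * 2 ^ (|j - 2 * k| - |j - k|)
      ≤ 3 ^ (2 * (m : ℤ) - 2 * k) * 2 ^ (k : ℤ) :=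
        mul_le_mul (zpow_le_zpow_right₀ (by norm_num) (by grind))
          (zpow_le_zpow_right₀ (by norm_num) (by grind)) (by positivity) (by positivity)
    _ = 9 ^ m * (2 / 9) ^ k := by
        rw [zpow_sub₀ three_ne_zero, zpow_mul, zpow_mul, zpow_natCast, zpow_natCast,
          zpow_natCast, div_pow]
        norm_num
        field_simp

lemma two_zpow_mul_three_zpow_le {j : ℤ} {m k : ℕ} (hj : |j| ≤ m) :
    (2 : ℝ) ^ (|j| - |j - k|) * 3 ^ (|j - k| - |j + k|) ≤ 36 ^ m * 2⁻¹ ^ k := by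
  calc (2 : ℝ) ^ (|j| - |j - k|) * 3 ^ (|j - k| - |j + k|)
      ≤ 2 ^ (2 * (m : ℤ) - k) * 3 ^ (2 * (m : ℤ)) :=
        mul_le_mul (zpow_le_zpow_right₀ (by norm_num) (by grind))
          (zpow_le_zpow_right₀ (by norm_num) (by grind)) (by positivity) (by positivity)
    _ = 36 ^ m * 2⁻¹ ^ k := by
        rw [zpow_sub₀ two_ne_zero, zpow_mul, zpow_mul, zpow_natCast, zpow_natCast,
          zpow_natCast, inv_pow, show (36 : ℝ) = 2 ^ 2 * 3 ^ 2 by norm_num, mul_pow]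
        field_simp

lemma tendsto_zero_of_le_const_mul_pow {u : ℕ → ℝ} {C r : ℝ} (hu₀ : ∀ k, 0 ≤ u k)
    (hr₀ : 0 ≤ r) (hr₁ : r < 1) (hu : ∀ k, u k ≤ C * r ^ k) : Tendsto u atTop (𝓝 0) := by
  refine squeeze_zero hu₀ hu ?_
  simpa using (tendsto_pow_atTop_nhds_zero_of_lt_one hr₀ hr₁).const_mul C

theorem stmt8_general
    {H : Type*} [NormedAddCommGroup H] [InnerProductSpace ℂ H]
    (e : HilbertBasis ℤ ℂ H)
    (W₁ W₂ W₁inv W₂inv : H →L[ℂ] H)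
    (hW₁ : ∀ n : ℤ, W₁ (e n) = if n < 0 then (2 : ℂ) • e (n + 1) else ((2 : ℂ)⁻¹) • e (n + 1))
    (hW₂ : ∀ n : ℤ, W₂ (e n) = if n < 0 then (3 : ℂ) • e (n + 1) else ((3 : ℂ)⁻¹) • e (n + 1))
    (hinv₁ : W₁ * W₁inv = 1 ∧ W₁inv * W₁ = 1)
    (hinv₂ : W₂ * W₂inv = 1 ∧ W₂inv * W₂ = 1)
    (P : ℕ → (H →L[ℂ] H))
    (hP₁ : ∀ (m : ℕ) (j : ℤ), |j| ≤ (m : ℤ) → P m (e j) = e j)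
    (hP₂ : ∀ (m : ℕ) (j : ℤ), (m : ℤ) < |j| → P m (e j) = 0) :
    ∀ m : ℕ,
      Tendsto (fun k : ℕ => ‖W₁ ^ k * W₂inv ^ (2 * k) * P m‖) atTop (𝓝 0) ∧
      Tendsto (fun k : ℕ => ‖W₂ ^ (2 * k) * W₁inv ^ k * P m‖) atTop (𝓝 0) := by
  have shift_apply (a : ℂ) (W : H →L[ℂ] H)
      (hW : ∀ n : ℤ, W (e n) = if n < 0 then a • e (n + 1) else a⁻¹ • e (n + 1)) (n : ℤ) :
      W (e n) = a ^ (|n| - |n + 1|) • e (n + 1) := by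
    rw [hW, ← ite_smul, ite_eq_zpow_abs_sub_abs]
  have hW₁' := shift_apply 2 W₁ hW₁
  have hW₂' := shift_apply 3 W₂ hW₂
  intro m
  constructor
  · refine tendsto_zero_of_le_const_mul_pow (C := (2 * m + 1) * 9 ^ m) (r := 2 / 9)
      (fun _ => norm_nonneg _) (by norm_num) (by norm_num) fun k => ?_
    refine (e.opNorm_mul_le_of_proj _ (P m) m (by positivity) (hP₁ m) (hP₂ m)
      fun j hj => ?_).trans_eq (mul_assoc _ _ _).symm
    rw [mul_apply_eq_comp, weightedShift_leftInv_pow_apply hW₂' three_ne_zero hinv₂.2, map_smul,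
      weightedShift_pow_apply hW₁' two_ne_zero, norm_smul, norm_smul, e.orthonormal.1,
      norm_zpow, norm_zpow, show j - ((2 * k : ℕ) : ℤ) + k = j - k by push_cast; ring]
    simpa using three_zpow_mul_two_zpow_le (k := k) hj
  · refine tendsto_zero_of_le_const_mul_pow (C := (2 * m + 1) * 36 ^ m) (r := 2⁻¹)
      (fun _ => norm_nonneg _) (by norm_num) (by norm_num) fun k => ?_
    refine (e.opNorm_mul_le_of_proj _ (P m) m (by positivity) (hP₁ m) (hP₂ m)
      fun j hj => ?_).trans_eq (mul_assoc _ _ _).symm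
    rw [mul_apply_eq_comp, weightedShift_leftInv_pow_apply hW₁' two_ne_zero hinv₁.2, map_smul,
      weightedShift_pow_apply hW₂' three_ne_zero, norm_smul, norm_smul, e.orthonormal.1,
      norm_zpow, norm_zpow, show j - k + ((2 * k : ℕ) : ℤ) = j + k by push_cast; ring]
    simpa using two_zpow_mul_three_zpow_le (k := k) hj

theorem stmt8
    {H : Type*} [NormedAddCommGroup H] [InnerProductSpace ℂ H] [CompleteSpace H]
    [TopologicalSpace.SeparableSpace H]
    (e : HilbertBasis ℤ ℂ H)
    (W₁ W₂ W₁inv W₂inv : H →L[ℂ] H)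
    (hW₁ : ∀ n : ℤ, W₁ (e n) = if n < 0 then (2 : ℂ) • e (n + 1) else ((2 : ℂ)⁻¹) • e (n + 1))
    (hW₂ : ∀ n : ℤ, W₂ (e n) = if n < 0 then (3 : ℂ) • e (n + 1) else ((3 : ℂ)⁻¹) • e (n + 1))
    (hinv₁ : W₁ * W₁inv = 1 ∧ W₁inv * W₁ = 1)
    (hinv₂ : W₂ * W₂inv = 1 ∧ W₂inv * W₂ = 1)
    (P : ℕ → (H →L[ℂ] H))
    (hP₁ : ∀ (m : ℕ) (j : ℤ), |j| ≤ (m : ℤ) → P m (e j) = e j)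
    (hP₂ : ∀ (m : ℕ) (j : ℤ), (m : ℤ) < |j| → P m (e j) = 0) :
    ∀ m : ℕ,
      Tendsto (fun k : ℕ => ‖W₁ ^ k * W₂inv ^ (2 * k) * P m‖) atTop (𝓝 0) ∧
      Tendsto (fun k : ℕ => ‖W₂ ^ (2 * k) * W₁inv ^ k * P m‖) atTop (𝓝 0) :=
  stmt8_general e W₁ W₂ W₁inv W₂inv hW₁ hW₂ hinv₁ hinv₂ P hP₁ hP₂
end

section
/- Let X be a separable Banach space and T a bounded operator on X. Suppose there exist a dense subset X₀ of X and a map S : X₀ → X₀ such that for every x ∈ X₀: (i) ∑_{n=0}^∞ T^n x converges unconditionally, (ii) ∑_{n=0}^∞ S^n x converges unconditionally, and (iii) T S x = x. Then T is topologically mixing: for all nonempty open sets U, V ⊆ X, the set {n ∈ ℕ : T^n(U) ∩ V ≠ ∅} is cofinite. -/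
/-!
Kitai's criterion. Given `x` and `y` in the dense set `X₀`, the vectors `uₙ = x + Sⁿ y` tend
to `x`, since `Sⁿ y → 0`, while `Tⁿ uₙ = Tⁿ x + y` tends to `y`, since `Tⁿ x → 0` and
`Tⁿ Sⁿ = id` on `X₀`. Hence `uₙ ∈ U` and `Tⁿ uₙ ∈ V` for all large `n`.
-/

open Filter Topology

theorem Set.LeftInvOn.iterate {α : Type*} {f g : α → α} {s : Set α} (h : Set.LeftInvOn f g s)
    (hg : Set.MapsTo g s s) (n : ℕ) : Set.LeftInvOn f^[n] g^[n] s := by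
  induction n with
  | zero => exact fun _ _ => rfl
  | succ n ih =>
    rw [Function.iterate_succ, Function.iterate_succ']
    exact ih.comp h (hg.iterate n)

theorem finite_setOf_not_exists_mem_of_dense_tendsto {X : Type*} [TopologicalSpace X]
    (f : ℕ → X → X) {D₁ D₂ : Set X} (hD₁ : Dense D₁) (hD₂ : Dense D₂)
    (h : ∀ x ∈ D₁, ∀ y ∈ D₂, ∃ u : ℕ → X,
      Tendsto u atTop (𝓝 x) ∧ Tendsto (fun n => f n (u n)) atTop (𝓝 y))
    {U V : Set X} (hU : IsOpen U) (hV : IsOpen V) (hUne : U.Nonempty) (hVne : V.Nonempty) :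
    {n : ℕ | ¬ ∃ u ∈ U, f n u ∈ V}.Finite := by
  obtain ⟨x, hxD, hxU⟩ := hD₁.exists_mem_open hU hUne
  obtain ⟨y, hyD, hyV⟩ := hD₂.exists_mem_open hV hVne
  obtain ⟨u, hux, hfuy⟩ := h x hxD y hyD
  have hev : ∀ᶠ n in cofinite, ∃ u ∈ U, f n u ∈ V := by
    rw [Nat.cofinite_eq_atTop]
    filter_upwards [hux.eventually (hU.mem_nhds hxU), hfuy.eventually (hV.mem_nhds hyV)]
      with n hnU hnV
    exact ⟨u n, hnU, hnV⟩
  exact eventually_cofinite.mp hev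

theorem ContinuousLinearMap.finite_setOf_not_exists_mem_of_kitai {R X : Type*} [Semiring R]
    [TopologicalSpace X] [AddCommMonoid X] [Module R X] [ContinuousAdd X]
    (T : X →L[R] X) {D₁ D₂ : Set X} (hD₁ : Dense D₁) (hD₂ : Dense D₂) (S : ℕ → X → X)
    (hT : ∀ x ∈ D₁, Tendsto (fun n => (T ^ n) x) atTop (𝓝 0))
    (hS : ∀ y ∈ D₂, Tendsto (fun n => S n y) atTop (𝓝 0))
    (hTS : ∀ y ∈ D₂, Tendsto (fun n => (T ^ n) (S n y)) atTop (𝓝 y))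
    {U V : Set X} (hU : IsOpen U) (hV : IsOpen V) (hUne : U.Nonempty) (hVne : V.Nonempty) :
    {n : ℕ | ¬ ∃ u ∈ U, (T ^ n) u ∈ V}.Finite := by
  refine finite_setOf_not_exists_mem_of_dense_tendsto (fun n => T ^ n) hD₁ hD₂ ?_ hU hV hUne hVne
  intro x hx y hy
  refine ⟨fun n => x + S n y, by simpa using tendsto_const_nhds.add (hS y hy), ?_⟩
  simpa using (hT x hx).add (hTS y hy)

theorem stmt9_general
    {X : Type*} [NormedAddCommGroup X] [NormedSpace ℂ X]
    (T : X →L[ℂ] X) (X₀ : Set X) (hdense : Dense X₀)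
    (S : X → X) (hS : Set.MapsTo S X₀ X₀)
    (h₁ : ∀ x ∈ X₀, Summable (fun n : ℕ => (T ^ n) x))
    (h₂ : ∀ x ∈ X₀, Summable (fun n : ℕ => S^[n] x))
    (h₃ : ∀ x ∈ X₀, T (S x) = x) :
    ∀ U V : Set X, IsOpen U → IsOpen V → U.Nonempty → V.Nonempty →
      {n : ℕ | ¬ ∃ u ∈ U, (T ^ n) u ∈ V}.Finite := by
  intro U V hU hV hUne hVne
  have hTS : ∀ y ∈ X₀, ∀ n, (T ^ n) (S^[n] y) = y := fun y hy n => by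
    rw [FunLike.coe_pow_eq_iterate]
    exact Set.LeftInvOn.iterate (f := T) h₃ hS n hy
  refine T.finite_setOf_not_exists_mem_of_kitai hdense hdense (fun n => S^[n])
    (fun x hx => (h₁ x hx).tendsto_atTop_zero) (fun y hy => (h₂ y hy).tendsto_atTop_zero)
    (fun y hy => ?_) hU hV hUne hVne
  simp only [hTS y hy, tendsto_const_nhds]

theorem stmt9
    {X : Type*} [NormedAddCommGroup X] [NormedSpace ℂ X] [CompleteSpace X]
    [TopologicalSpace.SeparableSpace X]
    (T : X →L[ℂ] X) (X₀ : Set X) (hdense : Dense X₀)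
    (S : X → X) (hS : Set.MapsTo S X₀ X₀)
    (h₁ : ∀ x ∈ X₀, Summable (fun n : ℕ => (T ^ n) x))
    (h₂ : ∀ x ∈ X₀, Summable (fun n : ℕ => S^[n] x))
    (h₃ : ∀ x ∈ X₀, T (S x) = x) :
    ∀ U V : Set X, IsOpen U → IsOpen V → U.Nonempty → V.Nonempty →
      {n : ℕ | ¬ ∃ u ∈ U, (T ^ n) u ∈ V}.Finite :=
  stmt9_general T X₀ hdense S hS h₁ h₂ h₃
end

section
/- Let X be a separable Banach space and T a bounded operator on X satisfying the Frequent Hypercyclicity Criterion (there exist a dense X₀ ⊆ X and S : X₀ → X₀ with ∑ T^n x and ∑ S^n x unconditionally convergent and TSx = x for all x ∈ X₀). Then T has a dense set of periodic points. -/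
/-!
For `x ∈ X₀` and `N ≥ 1`, the vectors `(T^N)^k x` (`k ≥ 0`) and `(S^N)^{-k} x` (`k < 0`) form a
two-sided orbit of `T^N` whose sum `p_N` over `ℤ` converges. Applying `T^N` shifts the orbit
by one, so `T^N p_N = p_N`. Since `p_N - x` is a sum of the subseries of `∑ T^n x` and `∑ S^n x`
indexed by the nonzero multiples of `N`, it tends to `0` as `N → ∞`; hence every point of the
dense set `X₀` is a limit of periodic points.
-/

open Filter Topology

theorem injective_add_one_mul {N : ℕ} (hN : N ≠ 0) : Function.Injective fun k : ℕ => (k + 1) * N :=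
  (mul_left_injective₀ hN).comp (add_left_injective 1)

theorem HasSum.map_eq_self_of_map_eq_succ {M F : Type*} [AddCommMonoid M] [TopologicalSpace M]
    [T2Space M] [FunLike F M M] [AddMonoidHomClass F M M] {L : F} (hL : Continuous L)
    {u : ℤ → M} {p : M} (hu : HasSum u p) (hshift : ∀ k, L (u k) = u (k + 1)) : L p = p := by
  have hmap : HasSum (u ∘ Equiv.addRight 1) (L p) := by
    simpa only [Function.comp_def, Equiv.coe_addRight, hshift] using hu.map L hL
  exact ((Equiv.addRight 1).hasSum_iff.mp hmap).unique hu

theorem Summable.tendsto_tsum_comp_add_one_mul {G : Type*} [AddCommGroup G] [TopologicalSpace G]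
    [IsTopologicalAddGroup G] {f : ℕ → G} (hf : Summable f) :
    Tendsto (fun N => ∑' k, f ((k + 1) * N)) atTop (𝓝 0) := by
  rw [tendsto_def]
  intro e he
  obtain ⟨N₀, hN₀⟩ := hf.nat_tsum_vanishing he
  filter_upwards [eventually_ge_atTop (max N₀ 1)] with N hN
  rw [Set.mem_preimage, ← tsum_range f (injective_add_one_mul (by omega))]
  refine hN₀ _ ?_
  rintro _ ⟨k, rfl⟩
  show N₀ ≤ (k + 1) * N
  nlinarith [le_max_left N₀ 1]

section OrbitSum

variable {R M : Type*} [Semiring R] [AddCommMonoid M] [TopologicalSpace M] [Module R M]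

/-- The sum over `k ∈ ℤ` of the orbit `(T^N)^k x`, continued to `k < 0` along `S^N`. -/
noncomputable def orbitSum (T : M →L[R] M) (S : M → M) (N : ℕ) (x : M) : M :=
  x + ∑' k : ℕ, (T ^ ((k + 1) * N)) x + ∑' k : ℕ, S^[(k + 1) * N] x

theorem pow_apply_orbitSum [ContinuousAdd M] [T2Space M] {T : M →L[R] M} {S : M → M} {s : Set M}
    (hTS : Set.LeftInvOn T S s) (hS : Set.MapsTo S s s) {x : M} (hx : x ∈ s) {N : ℕ}
    (hTx : Summable fun k : ℕ => (T ^ ((k + 1) * N)) x)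
    (hSx : Summable fun k : ℕ => S^[(k + 1) * N] x) :
    (T ^ N) (orbitSum T S N x) = orbitSum T S N x := by
  have hforward : HasSum (fun n : ℕ => (T ^ (n * N)) x) (x + ∑' k : ℕ, (T ^ ((k + 1) * N)) x) := by
    have h := HasSum.zero_add (f := fun n : ℕ => (T ^ (n * N)) x) hTx.hasSum
    rwa [zero_mul, pow_zero, one_apply_eq_self] at h
  refine (hforward.int_rec hSx.hasSum).map_eq_self_of_map_eq_succ (T ^ N).continuous ?_
  rintro (n | _ | n)
  · show (T ^ N) ((T ^ (n * N)) x) = (T ^ ((n + 1) * N)) x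
    rw [← mul_apply_eq_comp, ← pow_add, add_one_mul, add_comm]
  · show (T ^ N) (S^[(0 + 1) * N] x) = (T ^ (0 * N)) x
    rw [pow_apply_eq_iterate, pow_apply_eq_iterate, zero_add, one_mul, zero_mul,
      (hTS.iterate hS N) hx, Function.iterate_zero_apply]
  · show (T ^ N) (S^[(n + 1 + 1) * N] x) = S^[(n + 1) * N] x
    rw [pow_apply_eq_iterate, add_one_mul _ N, add_comm, Function.iterate_add_apply,
      (hTS.iterate hS N) (hS.iterate _ hx)]

end OrbitSum

theorem tendsto_orbitSum {R M : Type*} [Semiring R] [AddCommGroup M] [TopologicalSpace M]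
    [IsTopologicalAddGroup M] [Module R M] {T : M →L[R] M} {S : M → M} {x : M}
    (hTx : Summable fun n : ℕ => (T ^ n) x) (hSx : Summable fun n : ℕ => S^[n] x) :
    Tendsto (fun N => orbitSum T S N x) atTop (𝓝 x) := by
  have h := ((tendsto_const_nhds (x := x)).add hTx.tendsto_tsum_comp_add_one_mul).add
    hSx.tendsto_tsum_comp_add_one_mul
  rwa [add_zero, add_zero] at h

theorem stmt10_general
    {X : Type*} [NormedAddCommGroup X] [NormedSpace ℂ X] [CompleteSpace X]
    (T : X →L[ℂ] X) (X₀ : Set X) (hdense : Dense X₀)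
    (S : X → X) (hS : Set.MapsTo S X₀ X₀)
    (h₁ : ∀ x ∈ X₀, Summable (fun n : ℕ => (T ^ n) x))
    (h₂ : ∀ x ∈ X₀, Summable (fun n : ℕ => S^[n] x))
    (h₃ : ∀ x ∈ X₀, T (S x) = x) :
    Dense {p : X | ∃ N : ℕ, 1 ≤ N ∧ (T ^ N) p = p} := by
  have hperiodic : ∀ x ∈ X₀, ∀ N ≥ 1, (T ^ N) (orbitSum T S N x) = orbitSum T S N x := by
    intro x hx N hN
    have hinj := injective_add_one_mul (N := N) (by omega)
    exact pow_apply_orbitSum h₃ hS hx ((h₁ x hx).comp_injective hinj)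
      ((h₂ x hx).comp_injective hinj)
  have hsub : X₀ ⊆ closure {p : X | ∃ N : ℕ, 1 ≤ N ∧ (T ^ N) p = p} := fun x hx =>
    mem_closure_of_tendsto (tendsto_orbitSum (h₁ x hx) (h₂ x hx))
      ((eventually_ge_atTop 1).mono fun N hN => ⟨N, hN, hperiodic x hx N hN⟩)
  exact dense_closure.mp (hdense.mono hsub)

theorem stmt10
    {X : Type*} [NormedAddCommGroup X] [NormedSpace ℂ X] [CompleteSpace X]
    [TopologicalSpace.SeparableSpace X]
    (T : X →L[ℂ] X) (X₀ : Set X) (hdense : Dense X₀)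
    (S : X → X) (hS : Set.MapsTo S X₀ X₀)
    (h₁ : ∀ x ∈ X₀, Summable (fun n : ℕ => (T ^ n) x))
    (h₂ : ∀ x ∈ X₀, Summable (fun n : ℕ => S^[n] x))
    (h₃ : ∀ x ∈ X₀, T (S x) = x) :
    Dense {p : X | ∃ N : ℕ, 1 ≤ N ∧ (T ^ N) p = p} :=
  stmt10_general T X₀ hdense S hS h₁ h₂ h₃
end
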